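/- In the discrete uncorrelated reduction instance, there exists S ⊆ {1,…,m} with Σ_{i∈S} w_i = W if and only if f(W + 2ε) = −M − W + ε²/M. Equivalently, if no such S exists, then f(W + 2ε) = −M − V + (ε/M)(W + 2ε − V − ε) > −M − W + ε²/M, where V is the largest subset sum with V < W. -/

import Mathlib

/-
Any optimal follower solution `x` obeys the greedy exchange rule: if `xᵢ > 0` and `x_k < 1`
then the profit-to-weight ratio of `k` is at most that of `i`, and the capacity is tight as soon
as an item of positive profit is not full. If `x₀ = 0`, then `dᵀx ≥ -b`. If `x₀ > 0`, the ratio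
of the item `ε` (`1` or `m + 3`) is at least that of the item `M` (`m + 2` or `2m + 4`), which
pins them to `m + 3` and `m + 2`. Every weight item then has a ratio `≤ m + 1` or `≥ m + 4`, so
it is taken fully or not at all; the item `ε` is full and the item `M` fills the rest. Hence
`dᵀx = -M - V + (ε/M)(b - ε - V)` for a subset sum `V ≤ W`, a strictly decreasing function of
`V`, and raising exactly the ratios of a maximal such subset (and of `ε`) realises the value at
the largest subset sum `V ≤ W`. So `f(W + 2ε)` equals that value, which is the one at `V = W`
exactly when `W` is a subset sum.
-/

noncomputable section

/-- Feasibility for the follower's continuous knapsack problem. -/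
def feasibleKP {n : ℕ} (a : Fin n → ℝ) (b : ℝ) (x : Fin n → ℝ) : Prop :=
  (∑ i, a i * x i) ≤ b ∧ ∀ i, 0 ≤ x i ∧ x i ≤ 1

/-- Optimality for the follower's continuous knapsack problem with profits `c`. -/
def optimalKP {n : ℕ} (a c : Fin n → ℝ) (b : ℝ) (x : Fin n → ℝ) : Prop :=
  feasibleKP a b x ∧ ∀ y, feasibleKP a b y → ∑ i, c i * y i ≤ ∑ i, c i * x i

/-- The constant `ε = 1/4` of the reduction instance. -/
def eps : ℝ := 1 / 4

/-- The constant `M = ∑ wᵢ + ε` of the reduction instance. -/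
def Mval (m : ℕ) (w : Fin m → ℤ) : ℝ := (∑ i, (w i : ℝ)) + eps

/-- Item sizes `a = (ε, w₁, …, w_m, M)` of the reduction instance. -/
def avec (m : ℕ) (w : Fin m → ℤ) : Fin (m + 2) → ℝ := fun i =>
  if h0 : (i : ℕ) = 0 then eps
  else if h1 : (i : ℕ) = m + 1 then Mval m w
  else (w ⟨(i : ℕ) - 1, by have := i.isLt; omega⟩ : ℝ)

/-- Leader's item values `d = (−M, −w₁, …, −w_m, ε)` of the reduction instance. -/
def dvec (m : ℕ) (w : Fin m → ℤ) : Fin (m + 2) → ℝ := fun i =>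
  if h0 : (i : ℕ) = 0 then -Mval m w
  else if h1 : (i : ℕ) = m + 1 then eps
  else -(w ⟨(i : ℕ) - 1, by have := i.isLt; omega⟩ : ℝ)

/-- Membership in the discrete uncorrelated uncertainty set
`U = ∏_{i=1}^{n} {i·aᵢ, (n+i)·aᵢ}` (with `n = m + 2` and 1-based indices). -/
def inU (m : ℕ) (w : Fin m → ℤ) (c : Fin (m + 2) → ℝ) : Prop :=
  ∀ i : Fin (m + 2),
    c i = ((i : ℕ) + 1) * avec m w i ∨ c i = ((m + 2) + ((i : ℕ) + 1)) * avec m w i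

/-- The leader's objective `f(b) = min_{c ∈ U} min { dᵀx : x optimal for c }`
of the reduction instance (pessimistic view). -/
def fval (m : ℕ) (w : Fin m → ℤ) (b : ℝ) : ℝ :=
  sInf {v : ℝ | ∃ c x : Fin (m + 2) → ℝ,
    inU m w c ∧ optimalKP (avec m w) c b x ∧ v = ∑ i, dvec m w i * x i}

/-- `V` is a subset sum of `{w₁, …, w_m}`. -/
def isSubsetSum (m : ℕ) (w : Fin m → ℤ) (V : ℝ) : Prop :=
  ∃ S : Finset (Fin m), V = ∑ i ∈ S, (w i : ℝ)

theorem sum_mul_update {ι : Type*} [Fintype ι] [DecidableEq ι] (c x : ι → ℝ) (j : ι)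
    (v : ℝ) :
    ∑ i, c i * Function.update x j v i = ∑ i, c i * x i + c j * (v - x j) := by
  simp only [Function.update_apply, mul_ite, Finset.sum_ite, Finset.filter_eq',
    Finset.filter_ne', Finset.mem_univ, if_true, Finset.sum_singleton]
  rw [← Finset.add_sum_erase _ _ (Finset.mem_univ j)]
  ring

theorem update_mem_Icc {ι : Type*} [DecidableEq ι] {x : ι → ℝ} (hx : ∀ i, x i ∈ Set.Icc 0 1)
    (j : ι) {v : ℝ} (hv : v ∈ Set.Icc 0 1) : ∀ i, Function.update x j v i ∈ Set.Icc 0 1 := by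
  intro i
  rcases eq_or_ne i j with rfl | h
  · simpa using hv
  · simpa [Function.update_of_ne h] using hx i

namespace optimalKP

variable {n : ℕ} {a c : Fin n → ℝ} {b : ℝ} {x : Fin n → ℝ}

theorem sum_eq_of_lt_one (ha : ∀ i, 0 < a i) (hx : optimalKP a c b x) {j : Fin n}
    (hj : x j < 1) (hcj : 0 < c j) : ∑ i, a i * x i = b := by
  by_contra hne
  have slack : 0 < b - ∑ i, a i * x i := sub_pos.2 (hx.1.1.lt_of_ne hne)
  set δ := min (1 - x j) ((b - ∑ i, a i * x i) / a j)
  have hδ : 0 < δ := lt_min (by linarith) (div_pos slack (ha j))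
  have hδa : a j * δ ≤ b - ∑ i, a i * x i :=
    (le_div_iff₀' (ha j)).1 (min_le_right _ _)
  have hy : feasibleKP a b (Function.update x j (x j + δ)) := by
    refine ⟨by rw [sum_mul_update]; linarith, update_mem_Icc hx.1.2 j ⟨?_, ?_⟩⟩
    · linarith [(hx.1.2 j).1]
    · linarith [min_le_left (1 - x j) ((b - ∑ i, a i * x i) / a j)]
  have := hx.2 _ hy
  rw [sum_mul_update] at this
  nlinarith

theorem div_le_div_of_pos_of_lt_one (ha : ∀ i, 0 < a i) (hx : optimalKP a c b x) {i k : Fin n}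
    (hi : 0 < x i) (hk : x k < 1) : c k / a k ≤ c i / a i := by
  rcases eq_or_ne i k with rfl | hik
  · exact le_rfl
  set δ := min (a i * x i) (a k * (1 - x k))
  have hδ : 0 < δ := lt_min (mul_pos (ha i) hi) (mul_pos (ha k) (by linarith))
  have hδi : δ / a i ≤ x i := (div_le_iff₀' (ha i)).2 (min_le_left _ _)
  have hδk : δ / a k ≤ 1 - x k := (div_le_iff₀' (ha k)).2 (min_le_right _ _)
  set y := Function.update (Function.update x i (x i - δ / a i)) k (x k + δ / a k)
  have hsum : ∀ g : Fin n → ℝ,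
      ∑ l, g l * y l = ∑ l, g l * x l - g i * (δ / a i) + g k * (δ / a k) := by
    intro g
    rw [sum_mul_update, sum_mul_update, Function.update_of_ne hik.symm]
    ring
  have hy : feasibleKP a b y := by
    refine ⟨?_, update_mem_Icc (update_mem_Icc hx.1.2 i ⟨?_, ?_⟩) k ⟨?_, ?_⟩⟩
    · rw [hsum, mul_div_cancel₀ _ (ha i).ne', mul_div_cancel₀ _ (ha k).ne']
      linarith [hx.1.1]
    · linarith
    · linarith [(hx.1.2 i).2, div_pos hδ (ha i)]
    · linarith [(hx.1.2 k).1, div_pos hδ (ha k)]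
    · linarith
  have hcy := hx.2 y hy
  rw [hsum] at hcy
  have : c k / a k * δ ≤ c i / a i * δ := by
    calc c k / a k * δ = c k * (δ / a k) := by ring
      _ ≤ c i * (δ / a i) := by linarith
      _ = c i / a i * δ := by ring
  exact le_of_mul_le_mul_right this hδ

theorem eq_zero_of_div_lt (ha : ∀ i, 0 < a i) (hx : optimalKP a c b x) {i k : Fin n}
    (hik : c i / a i < c k / a k) (hk : x k < 1) : x i = 0 := by
  by_contra h
  exact hik.not_ge (hx.div_le_div_of_pos_of_lt_one ha ((hx.1.2 i).1.lt_of_ne' h) hk)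

theorem eq_one_of_div_lt (ha : ∀ i, 0 < a i) (hx : optimalKP a c b x) {i k : Fin n}
    (hik : c i / a i < c k / a k) (hi : 0 < x i) : x k = 1 := by
  by_contra h
  exact hik.not_ge (hx.div_le_div_of_pos_of_lt_one ha hi ((hx.1.2 k).2.lt_of_ne h))

end optimalKP

theorem optimalKP_of_threshold {n : ℕ} {a c : Fin n → ℝ} {b : ℝ} {x : Fin n → ℝ}
    (hx : feasibleKP a b x) (hb : ∑ i, a i * x i = b) {ρ : ℝ} (hρ : 0 ≤ ρ)
    (h1 : ∀ i, ρ * a i < c i → x i = 1) (h0 : ∀ i, c i < ρ * a i → x i = 0) :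
    optimalKP a c b x := by
  refine ⟨hx, fun y hy => ?_⟩
  have hterm : ∀ i, c i * y i ≤ c i * x i + ρ * (a i * y i - a i * x i) := by
    intro i
    rcases lt_trichotomy (c i) (ρ * a i) with h | h | h
    · rw [h0 i h]; nlinarith [(hy.2 i).1]
    · rw [h]; exact le_of_eq (by ring)
    · rw [h1 i h]; nlinarith [(hy.2 i).2]
  calc ∑ i, c i * y i ≤ ∑ i, (c i * x i + ρ * (a i * y i - a i * x i)) :=
        Finset.sum_le_sum fun i _ => hterm i
    _ = ∑ i, c i * x i + ρ * (∑ i, a i * y i - ∑ i, a i * x i) := by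
        rw [Finset.sum_add_distrib, ← Finset.mul_sum, Finset.sum_sub_distrib]
    _ ≤ ∑ i, c i * x i := by nlinarith [hy.1]

section Reduction

variable {m : ℕ} {w : Fin m → ℤ}

/-- The index of the item `wⱼ` in `avec` and `dvec`. -/
def weightIdx (j : Fin m) : Fin (m + 2) := j.castSucc.succ

theorem eq_zero_or_eq_last_or_eq_weightIdx (i : Fin (m + 2)) :
    i = 0 ∨ i = Fin.last (m + 1) ∨ ∃ j, i = weightIdx j := by
  rcases Fin.eq_zero_or_eq_succ i with rfl | ⟨k, rfl⟩
  · exact Or.inl rfl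
  rcases Fin.eq_castSucc_or_eq_last k with ⟨j, rfl⟩ | rfl
  · exact Or.inr (Or.inr ⟨j, rfl⟩)
  · exact Or.inr (Or.inl (Fin.succ_last m))

theorem sum_fin_eq_zero_add_weightIdx_add_last {M : Type*} [AddCommMonoid M]
    (f : Fin (m + 2) → M) :
    ∑ i, f i = f 0 + ∑ j, f (weightIdx j) + f (Fin.last (m + 1)) := by
  rw [Fin.sum_univ_succ, Fin.sum_univ_castSucc]
  exact (add_assoc _ _ _).symm

@[simp] theorem avec_zero : avec m w 0 = eps := by simp [avec]
@[simp] theorem avec_last : avec m w (Fin.last (m + 1)) = Mval m w := by simp [avec]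
@[simp] theorem avec_weightIdx (j : Fin m) : avec m w (weightIdx j) = w j := by
  simp [avec, weightIdx, j.isLt.ne]
@[simp] theorem dvec_zero : dvec m w 0 = -Mval m w := by simp [dvec]
@[simp] theorem dvec_last : dvec m w (Fin.last (m + 1)) = eps := by simp [dvec]
@[simp] theorem dvec_weightIdx (j : Fin m) : dvec m w (weightIdx j) = -w j := by
  simp [dvec, weightIdx, j.isLt.ne]

theorem eps_pos : 0 < eps := by norm_num [eps]

theorem Mval_pos (hw : ∀ i, 1 ≤ w i) : 0 < Mval m w := by
  have : (0 : ℝ) ≤ ∑ i, (w i : ℝ) := Finset.sum_nonneg fun i _ => by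
    exact_mod_cast zero_le_one.trans (hw i)
  unfold Mval
  linarith [eps_pos]

theorem add_two_eps_add_eps_le_Mval {W : ℤ} (hW : W ≤ ∑ i, w i - 1) :
    (W : ℝ) + 2 * eps + eps ≤ Mval m w := by
  have : (W : ℝ) ≤ ∑ i, (w i : ℝ) - 1 := by exact_mod_cast hW
  unfold Mval
  norm_num [eps] at *
  linarith

theorem avec_pos (hw : ∀ i, 1 ≤ w i) (i : Fin (m + 2)) : 0 < avec m w i := by
  unfold avec
  split_ifs
  · exact eps_pos
  · exact Mval_pos hw
  · exact_mod_cast zero_lt_one.trans_le (hw _)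

theorem sum_avec_mul (x : Fin (m + 2) → ℝ) :
    ∑ i, avec m w i * x i =
      eps * x 0 + ∑ j, (w j : ℝ) * x (weightIdx j) + Mval m w * x (Fin.last (m + 1)) := by
  simp [sum_fin_eq_zero_add_weightIdx_add_last]

theorem sum_dvec_mul (x : Fin (m + 2) → ℝ) :
    ∑ i, dvec m w i * x i =
      -Mval m w * x 0 - ∑ j, (w j : ℝ) * x (weightIdx j) + eps * x (Fin.last (m + 1)) := by
  simp [sum_fin_eq_zero_add_weightIdx_add_last, sub_eq_add_neg]

theorem inU.div_avec (hw : ∀ i, 1 ≤ w i) {c : Fin (m + 2) → ℝ} (hc : inU m w c)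
    (i : Fin (m + 2)) :
    c i / avec m w i = (i : ℕ) + 1 ∨ c i / avec m w i = (m + 2) + ((i : ℕ) + 1) := by
  have ha := (avec_pos hw i).ne'
  rcases hc i with h | h <;> simp [h, ha]

theorem inU.pos (hw : ∀ i, 1 ≤ w i) {c : Fin (m + 2) → ℝ} (hc : inU m w c)
    (i : Fin (m + 2)) : 0 < c i := by
  have ha := avec_pos hw i
  rcases hc i with h | h <;> rw [h] <;> positivity

theorem isSubsetSum.nonneg (hw : ∀ i, 1 ≤ w i) {V : ℝ} (hV : isSubsetSum m w V) : 0 ≤ V := by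
  obtain ⟨S, rfl⟩ := hV
  exact Finset.sum_nonneg fun i _ => by exact_mod_cast zero_le_one.trans (hw i)

theorem isSubsetSum.le_of_lt_add_one {V : ℝ} (hV : isSubsetSum m w V) {W : ℤ}
    (h : V < W + 1) : V ≤ W := by
  obtain ⟨S, rfl⟩ := hV
  push_cast [← Int.cast_sum] at h ⊢
  exact_mod_cast Int.lt_add_one_iff.1 (by exact_mod_cast h)

theorem exists_isGreatest_subsetSum {W : ℝ} (hW : 0 ≤ W) :
    ∃ K, IsGreatest {V | isSubsetSum m w V ∧ V ≤ W} K := by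
  have hfin : {V | isSubsetSum m w V ∧ V ≤ W}.Finite :=
    (Set.finite_range fun S : Finset (Fin m) => ∑ i ∈ S, (w i : ℝ)).subset
      fun V ⟨⟨S, hS⟩, _⟩ => ⟨S, hS.symm⟩
  obtain ⟨K, hK, hmax⟩ := Set.exists_max_image _ id hfin ⟨0, ⟨∅, by simp⟩, hW⟩
  exact ⟨K, hK, hmax⟩

/-- `dᵀx` at `x = (1, 𝟙_S, (b - ε - V) / M)`, where `S` has weight `V`. -/
def packingValue (m : ℕ) (w : Fin m → ℤ) (b V : ℝ) : ℝ :=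
  -Mval m w - V + eps / Mval m w * (b - V - eps)

theorem packingValue_strictAnti (hw : ∀ i, 1 ≤ w i) (b : ℝ) :
    StrictAnti (packingValue m w b) := by
  intro V V' h
  have : 0 < eps / Mval m w := div_pos eps_pos (Mval_pos hw)
  unfold packingValue
  nlinarith

theorem packingValue_le_neg (hw : ∀ i, 1 ≤ w i) {b V : ℝ} (hb : b + eps ≤ Mval m w)
    (hV : 0 ≤ V) : packingValue m w b V ≤ -b := by
  have hM := Mval_pos hw
  have : eps / Mval m w * (b - V - eps) ≤ eps := by
    rw [div_mul_eq_mul_div, div_le_iff₀ hM]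
    nlinarith [eps_pos]
  unfold packingValue
  linarith

theorem feasibleKP.lt_one_last (hw : ∀ i, 1 ≤ w i) {b : ℝ} {x : Fin (m + 2) → ℝ}
    (hx : feasibleKP (avec m w) b x) (hb : b < Mval m w) : x (Fin.last (m + 1)) < 1 := by
  by_contra! h
  have := hx.1
  rw [sum_avec_mul] at this
  have : 0 ≤ ∑ j, (w j : ℝ) * x (weightIdx j) := Finset.sum_nonneg fun j _ =>
    mul_nonneg (by exact_mod_cast zero_le_one.trans (hw j)) (hx.2 _).1
  nlinarith [eps_pos, (hx.2 0).1, Mval_pos hw]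

theorem feasibleKP.neg_le_sum_dvec_mul (hw : ∀ i, 1 ≤ w i) {b : ℝ} {x : Fin (m + 2) → ℝ}
    (hx : feasibleKP (avec m w) b x) (hx0 : x 0 = 0) : -b ≤ ∑ i, dvec m w i * x i := by
  have := hx.1
  rw [sum_avec_mul, hx0] at this
  rw [sum_dvec_mul, hx0]
  nlinarith [eps_pos, (hx.2 (Fin.last (m + 1))).1, Mval_pos hw]

theorem optimalKP.exists_subset_of_pos_zero (hw : ∀ i, 1 ≤ w i) {W : ℤ}
    (hW : W ≤ ∑ i, w i - 1) {c x : Fin (m + 2) → ℝ} (hc : inU m w c)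
    (hx : optimalKP (avec m w) c (W + 2 * eps) x) (hx0 : 0 < x 0) :
    ∃ S : Finset (Fin m), ∑ j ∈ S, (w j : ℝ) ≤ W ∧
      ∑ i, dvec m w i * x i = packingValue m w (W + 2 * eps) (∑ j ∈ S, (w j : ℝ)) := by
  have ha := avec_pos hw
  have hM := Mval_pos hw
  have hbM := add_two_eps_add_eps_le_Mval (w := w) hW
  have heps : eps = 1 / 4 := rfl
  have hxL : x (Fin.last (m + 1)) < 1 := hx.1.lt_one_last hw (by linarith [eps_pos])
  -- ratio pairs: `{1, m + 3}` for `ε`, `{m + 2, 2m + 4}` for `M`; only `m + 3 ≥ m + 2` fits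
  have hρ : c (Fin.last (m + 1)) / avec m w (Fin.last (m + 1)) = m + 2 ∧
      c 0 / avec m w 0 = m + 3 := by
    have h := hx.div_le_div_of_pos_of_lt_one ha hx0 hxL
    rcases hc.div_avec hw 0 with h0 | h0 <;>
      rcases hc.div_avec hw (Fin.last (m + 1)) with hL | hL <;>
      simp only [h0, hL, Fin.val_zero, Fin.val_last, Nat.cast_zero, Nat.cast_add,
        Nat.cast_one] at h ⊢ <;> constructor <;> linarith
  have hbin : ∀ j, x (weightIdx j) = 0 ∨ x (weightIdx j) = 1 := by
    intro j
    have hj : ((j : ℕ) : ℝ) + 1 ≤ m := by exact_mod_cast j.isLt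
    have hval : ((weightIdx j : ℕ) : ℝ) = (j : ℕ) + 1 := by simp [weightIdx]
    rcases hc.div_avec hw (weightIdx j) with h | h <;> rw [hval] at h
    · exact Or.inl (hx.eq_zero_of_div_lt ha (by rw [h, hρ.1]; linarith) hxL)
    · exact Or.inr (hx.eq_one_of_div_lt ha (by rw [h, hρ.2]; linarith) hx0)
  set S := Finset.univ.filter fun j => x (weightIdx j) = 1
  have hsum : ∑ j, (w j : ℝ) * x (weightIdx j) = ∑ j ∈ S, (w j : ℝ) := by
    rw [Finset.sum_filter]
    refine Finset.sum_congr rfl fun j _ => ?_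
    rcases hbin j with h | h <;> simp [h]
  have hcap := hx.1.1
  rw [sum_avec_mul, hsum] at hcap
  have hSW : ∑ j ∈ S, (w j : ℝ) ≤ W := isSubsetSum.le_of_lt_add_one ⟨S, rfl⟩ (by
    nlinarith [(hx.1.2 0).1, (hx.1.2 (Fin.last (m + 1))).1, eps_pos])
  -- if `x 0 < 1`, the item `M` of smaller ratio is empty and `ε x₀ + V = W + 2ε` is impossible
  have hx0' : x 0 = 1 := by
    by_contra h
    have hx0lt : x 0 < 1 := (hx.1.2 0).2.lt_of_ne h
    have hL0 : x (Fin.last (m + 1)) = 0 :=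
      hx.eq_zero_of_div_lt ha (by rw [hρ.1, hρ.2]; linarith) hx0lt
    have htight := hx.sum_eq_of_lt_one ha hx0lt (hc.pos hw 0)
    rw [sum_avec_mul, hsum, hL0] at htight
    nlinarith [eps_pos]
  have htight := hx.sum_eq_of_lt_one ha hxL (hc.pos hw _)
  rw [sum_avec_mul, hsum, hx0'] at htight
  refine ⟨S, hSW, ?_⟩
  rw [sum_dvec_mul, hsum, hx0']
  unfold packingValue
  rw [← htight]
  field_simp
  ring

theorem packingValue_le_sum_dvec_mul (hw : ∀ i, 1 ≤ w i) {W : ℤ} (hW : W ≤ ∑ i, w i - 1)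
    {K : ℝ} (hK : IsGreatest {V | isSubsetSum m w V ∧ V ≤ W} K) {c x : Fin (m + 2) → ℝ}
    (hc : inU m w c) (hx : optimalKP (avec m w) c (W + 2 * eps) x) :
    packingValue m w (W + 2 * eps) K ≤ ∑ i, dvec m w i * x i := by
  rcases (hx.1.2 0).1.eq_or_lt with h0 | h0
  · exact (packingValue_le_neg hw (add_two_eps_add_eps_le_Mval hW) (hK.1.1.nonneg hw)).trans
      (hx.1.neg_le_sum_dvec_mul hw h0.symm)
  · obtain ⟨S, hSW, hval⟩ := hx.exists_subset_of_pos_zero hw hW hc h0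
    rw [hval]
    exact (packingValue_strictAnti hw _).antitone (hK.2 ⟨⟨S, rfl⟩, hSW⟩)

theorem exists_optimalKP_packingValue_eq (hw : ∀ i, 1 ≤ w i) {W : ℤ}
    (hW : W ≤ ∑ i, w i - 1) (S : Finset (Fin m)) (hS : ∑ j ∈ S, (w j : ℝ) ≤ W) :
    ∃ c x : Fin (m + 2) → ℝ, inU m w c ∧ optimalKP (avec m w) c (W + 2 * eps) x ∧
      packingValue m w (W + 2 * eps) (∑ j ∈ S, (w j : ℝ)) = ∑ i, dvec m w i * x i := by
  have hM := Mval_pos hw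
  have hbM := add_two_eps_add_eps_le_Mval (w := w) hW
  have hV := isSubsetSum.nonneg hw ⟨S, rfl⟩
  set V := ∑ j ∈ S, (w j : ℝ)
  set t := (W + 2 * eps - eps - V) / Mval m w
  have ht : 0 ≤ t ∧ t < 1 := ⟨div_nonneg (by linarith [eps_pos]) hM.le,
    (div_lt_one hM).2 (by linarith [eps_pos])⟩
  set x : Fin (m + 2) → ℝ := Fin.cons 1 (Fin.snoc (fun j => if j ∈ S then 1 else 0) t)
  have hx0 : x 0 = 1 := rfl
  have hxS : ∀ j, x (weightIdx j) = if j ∈ S then 1 else 0 := by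
    intro j; simp [x, weightIdx]
  have hxL : x (Fin.last (m + 1)) = t := by
    simp [x, ← Fin.succ_last]
  have hx01 : ∀ i, i ≠ Fin.last (m + 1) → x i = 0 ∨ x i = 1 := by
    intro i hi
    rcases eq_zero_or_eq_last_or_eq_weightIdx i with rfl | rfl | ⟨j, rfl⟩
    · exact Or.inr hx0
    · exact absurd rfl hi
    · rw [hxS]; split_ifs <;> simp
  set c : Fin (m + 2) → ℝ := fun i =>
    (if x i = 1 then ((m : ℝ) + 2) + (((i : ℕ) : ℝ) + 1) else ((i : ℕ) : ℝ) + 1) * avec m w i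
  have hsum : ∑ i, avec m w i * x i = W + 2 * eps := by
    rw [sum_avec_mul, hx0, hxL]
    simp only [hxS, mul_ite, mul_one, mul_zero, Finset.sum_ite_mem, Finset.univ_inter]
    simp only [t]
    field_simp
    ring
  have hfeas : feasibleKP (avec m w) (W + 2 * eps) x := by
    refine ⟨hsum.le, fun i => ?_⟩
    by_cases hi : i = Fin.last (m + 1)
    · rw [hi, hxL]; exact ⟨ht.1, ht.2.le⟩
    · rcases hx01 i hi with h | h <;> rw [h] <;> norm_num
  refine ⟨c, x, fun i => by by_cases h : x i = 1 <;> simp [c, h], ?_, ?_⟩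
  · refine optimalKP_of_threshold hfeas hsum (ρ := m + 2) (by positivity) (fun i hi => ?_)
      (fun i hi => ?_)
    · by_contra h
      have hle : ((i : ℕ) : ℝ) + 1 ≤ m + 2 := by exact_mod_cast i.isLt
      simp only [c, h, if_false] at hi
      nlinarith [avec_pos hw i]
    · by_cases h : x i = 1
      · simp only [c, h, if_true] at hi
        nlinarith [avec_pos hw i]
      · simp only [c, h, if_false] at hi
        have hlt' : ((i : ℕ) : ℝ) + 1 < m + 2 := lt_of_mul_lt_mul_right hi (avec_pos hw i).le
        have hlt : (i : ℕ) < m + 1 := by exact_mod_cast (by linarith : ((i : ℕ) : ℝ) < m + 1)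
        exact (hx01 i (Fin.ne_of_lt hlt)).resolve_right h
  · rw [sum_dvec_mul, hx0, hxL]
    simp only [hxS, mul_ite, mul_one, mul_zero, Finset.sum_ite_mem, Finset.univ_inter]
    unfold packingValue
    simp only [t]
    field_simp
    ring

theorem fval_eq_packingValue (hw : ∀ i, 1 ≤ w i) {W : ℤ}
    (hW : W ≤ ∑ i, w i - 1) {K : ℝ} (hK : IsGreatest {V | isSubsetSum m w V ∧ V ≤ W} K) :
    fval m w (W + 2 * eps) = packingValue m w (W + 2 * eps) K := by
  obtain ⟨⟨S, rfl⟩, hSW⟩ := hK.1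
  refine IsLeast.csInf_eq ⟨?_, ?_⟩
  · obtain ⟨c, x, hc, hx, hval⟩ := exists_optimalKP_packingValue_eq hw hW S hSW
    exact ⟨c, x, hc, hx, hval⟩
  · rintro _ ⟨c, x, hc, hx, rfl⟩
    exact packingValue_le_sum_dvec_mul hw hW hK hc hx

end Reduction

/-- Evaluating the leader's objective of the discrete uncorrelated reduction
instance at the single point `W + 2ε` decides the subset sum instance:
`W` is a subset sum iff `f(W + 2ε) = −M − W + ε²/M`; if `W` is not a subset
sum, then `f(W + 2ε) = −M − V + (ε/M)(W + 2ε − V − ε) > −M − W + ε²/M`, where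
`V` is the largest subset sum below `W`. -/
theorem discrete_uncorrelated_evaluation_decides_subset_sum
    (m : ℕ) (w : Fin m → ℤ) (W : ℤ) (hw : ∀ i, 1 ≤ w i)
    (hW1 : 1 ≤ W) (hW2 : W ≤ (∑ i, w i) - 1) :
    ((∃ S : Finset (Fin m), (∑ i ∈ S, (w i : ℝ)) = (W : ℝ)) ↔
      fval m w ((W : ℝ) + 2 * eps) = -Mval m w - W + eps ^ 2 / Mval m w) ∧
    (¬ (∃ S : Finset (Fin m), (∑ i ∈ S, (w i : ℝ)) = (W : ℝ)) →
      ∀ V : ℝ, isSubsetSum m w V → V < (W : ℝ) →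
        (∀ V' : ℝ, isSubsetSum m w V' → V' < (W : ℝ) → V' ≤ V) →
        fval m w ((W : ℝ) + 2 * eps)
            = -Mval m w - V + eps / Mval m w * ((W : ℝ) + 2 * eps - V - eps) ∧
        -Mval m w - W + eps ^ 2 / Mval m w < fval m w ((W : ℝ) + 2 * eps)) := by
  obtain ⟨K, hK⟩ := exists_isGreatest_subsetSum (w := w) (W := W)
    (Int.cast_nonneg (zero_le_one.trans hW1))
  have hf := fval_eq_packingValue hw hW2 hK
  have hanti := packingValue_strictAnti hw ((W : ℝ) + 2 * eps)
  have hvalW : packingValue m w (W + 2 * eps) W = -Mval m w - W + eps ^ 2 / Mval m w := by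
    unfold packingValue; ring
  have hKW : K = W ↔ ∃ S : Finset (Fin m), ∑ i ∈ S, (w i : ℝ) = W :=
    ⟨fun h => hK.1.1.imp fun _ hS => (hS.symm.trans h : _),
      fun ⟨S, hS⟩ => hK.1.2.antisymm (hK.2 ⟨⟨S, hS.symm⟩, le_rfl⟩)⟩
  refine ⟨?_, fun hno V hV hVW hVmax => ?_⟩
  · rw [← hKW, hf, ← hvalW]
    exact hanti.injective.eq_iff.symm
  · have hKV : K = V := le_antisymm
      (hVmax K hK.1.1 (hK.1.2.lt_of_ne fun h => hno (hKW.1 h))) (hK.2 ⟨hV, hVW.le⟩)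
    rw [hf, ← hvalW, hKV]
    exact ⟨rfl, hanti hVW⟩
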